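/- Let G = Sp(y₁,…,y_d) be a spider with d ≥ 3 legs, each of length y_i ≥ 2, and size q = y₁+⋯+y_d. If d(d+1) > 2(2q−1), then χ_la(G) = d+2. -/

import Mathlib

open SimpleGraph

/-- The induced vertex sum of an edge labeling. -/
noncomputable def vertexSum {V : Type*} (G : SimpleGraph V) (f : Sym2 V → ℕ) (x : V) : ℕ :=
  ∑ᶠ y ∈ G.neighborSet x, f s(x, y)

/-- `f` is a local antimagic labeling of `G`. -/
def IsLocalAntimagic {V : Type*} (G : SimpleGraph V) (f : Sym2 V → ℕ) : Prop :=
  Set.BijOn f G.edgeSet (Set.Icc 1 G.edgeSet.ncard) ∧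
  ∀ ⦃x y : V⦄, G.Adj x y → vertexSum G f x ≠ vertexSum G f y

/-- The number of distinct induced vertex labels of `f`. -/
noncomputable def colorCount {V : Type*} (G : SimpleGraph V) (f : Sym2 V → ℕ) : ℕ :=
  (Set.range (vertexSum G f)).ncard

/-- The local antimagic chromatic number. -/
noncomputable def chiLA {V : Type*} (G : SimpleGraph V) : ℕ :=
  sInf {n | ∃ f : Sym2 V → ℕ, IsLocalAntimagic G f ∧ colorCount G f = n}

/-- A pendant vertex: a vertex of degree 1. -/
def IsPendant {V : Type*} (G : SimpleGraph V) (x : V) : Prop :=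
  (G.neighborSet x).ncard = 1

/-- A pendant edge: an edge incident to a pendant vertex. -/
def IsPendantEdge {V : Type*} (G : SimpleGraph V) (e : Sym2 V) : Prop :=
  e ∈ G.edgeSet ∧ ∃ x ∈ e, IsPendant G x

/-- The spider graph with `d` legs of lengths `y i`: the core is `none`, and leg `i`
consists of vertices `some ⟨i, j⟩` for `j : Fin (y i)`, forming a path from the core. -/
def spider (d : ℕ) (y : Fin d → ℕ) : SimpleGraph (Option (Σ i : Fin d, Fin (y i))) :=
  SimpleGraph.fromRel (fun u v =>
    ∃ (i : Fin d) (j : Fin (y i)), (u = none ∧ v = some ⟨i, j⟩ ∧ (j : ℕ) = 0) ∨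
      (∃ k : Fin (y i), u = some ⟨i, j⟩ ∧ v = some ⟨i, k⟩ ∧ (j : ℕ) + 1 = (k : ℕ)))


/-!
For the lower bound, the `d` tips carry the `d` distinct labels of the pendant edges, all at
most `q`; the core sum is a sum of `d` distinct positive labels, hence at least
`d(d+1)/2 > 2q - 1`; and the degree-two vertex on the edge labelled `q` (legs have length at
least two) has a sum strictly between `q` and `2q`. This gives `d + 2` distinct sums.

For the upper bound, number the edges leg by leg from the tips inwards and give them the labels
`q, 1, q-1, 2, q-2, …` in this order. The sums at degree-two vertices then alternate between
`q + 1` and `q`, where `q` is also the label of the first tip edge, and the core sum exceeds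
`2q`; so the only sums are the `d` tip labels, `q + 1` and the core sum.
-/

open Function Finset

theorem card_mul_succ_le_two_mul_sum (s : Finset ℕ) (hs : ∀ x ∈ s, 0 < x) :
    #s * (#s + 1) ≤ 2 * ∑ x ∈ s, x := by
  induction s using Finset.induction_on_max with
  | empty => simp
  | insert a s hlt ih =>
    have ha : a ∉ s := fun h => lt_irrefl a (hlt a h)
    have hcard : #s + 1 ≤ a := by
      have hsub : s ⊆ Ioo 0 a := fun x hx => mem_Ioo.mpr ⟨hs x (mem_insert_of_mem hx), hlt x hx⟩
      have hle := card_le_card hsub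
      have hapos := hs a (mem_insert_self a s)
      rw [Nat.card_Ioo] at hle
      omega
    rw [card_insert_of_notMem ha, sum_insert ha]
    have := ih fun x hx => hs x (mem_insert_of_mem hx)
    nlinarith

theorem card_mul_succ_le_two_mul_sum_of_injective {ι : Type*} [Fintype ι] {g : ι → ℕ}
    (hg : Injective g) (hpos : ∀ i, 0 < g i) :
    Fintype.card ι * (Fintype.card ι + 1) ≤ 2 * ∑ i, g i := by
  classical
  have := card_mul_succ_le_two_mul_sum (univ.image g) (by simpa using hpos)
  rwa [card_image_of_injective _ hg, sum_image hg.injOn, card_univ] at this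

theorem Fin.exists_consecutive {n : ℕ} (hn : 2 ≤ n) (j : Fin n) :
    ∃ a b : Fin n, (a : ℕ) + 1 = b ∧ (j = a ∨ j = b) := by
  by_cases h : (j : ℕ) + 1 < n
  · exact ⟨j, ⟨j + 1, h⟩, rfl, Or.inl rfl⟩
  · exact ⟨⟨j - 1, by omega⟩, j, by simp only; omega, Or.inr rfl⟩

theorem Sigma.fin_ext_iff {ι : Type*} {n : ι → ℕ} {p p' : Σ i, Fin (n i)} :
    p = p' ↔ p.1 = p'.1 ∧ (p.2 : ℕ) = p'.2 := by
  rcases p with ⟨i, j⟩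
  rcases p' with ⟨i', j'⟩
  constructor
  · rintro ⟨⟩; exact ⟨rfl, rfl⟩
  · rintro ⟨h₁, h₂⟩
    simp only at h₁ h₂
    subst h₁
    rw [Fin.ext h₂]

section LocalAntimagic

variable {V : Type*} {G : SimpleGraph V} {f : Sym2 V → ℕ}

theorem card_le_colorCount [Finite V] {T : Finset ℕ} (hT : ↑T ⊆ Set.range (vertexSum G f)) :
    #T ≤ colorCount G f := by
  rw [← Set.ncard_coe_finset]
  exact Set.ncard_le_ncard hT (Set.finite_range _)

theorem colorCount_le_card {T : Finset ℕ} (hT : Set.range (vertexSum G f) ⊆ ↑T) :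
    colorCount G f ≤ #T := by
  rw [← Set.ncard_coe_finset]
  exact Set.ncard_le_ncard hT T.finite_toSet

theorem chiLA_eq_of_le_of_forall_le {n : ℕ}
    (hex : ∃ f, IsLocalAntimagic G f ∧ colorCount G f ≤ n)
    (hle : ∀ f, IsLocalAntimagic G f → n ≤ colorCount G f) : chiLA G = n := by
  obtain ⟨f, hf, hfn⟩ := hex
  have hmem : n ∈ {n | ∃ f, IsLocalAntimagic G f ∧ colorCount G f = n} :=
    ⟨f, hf, hfn.antisymm (hle f hf)⟩
  exact (Nat.sInf_le hmem).antisymm (le_csInf ⟨n, hmem⟩ fun _ ⟨g, hg, hgm⟩ => hgm ▸ hle g hg)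

end LocalAntimagic

/-- The sequence `q, 1, q - 1, 2, q - 2, …`; consecutive terms sum alternately to `q + 1`
and `q`. -/
def zigzag (q p : ℕ) : ℕ := if p % 2 = 0 then q - p / 2 else p / 2 + 1

theorem zigzag_zero (q : ℕ) : zigzag q 0 = q := by simp [zigzag]

theorem zigzag_succ_add_zigzag {q p : ℕ} (h : p + 1 < q) :
    zigzag q (p + 1) + zigzag q p = q + 1 - p % 2 := by
  unfold zigzag; split_ifs <;> omega

theorem bijOn_zigzag (q : ℕ) : Set.BijOn (zigzag q) (Set.Iio q) (Set.Icc 1 q) := by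
  refine ⟨fun p hp => ?_, fun a ha b hb h => ?_, fun v hv => ?_⟩
  · simp only [Set.mem_Iio, Set.mem_Icc, zigzag] at hp ⊢; split_ifs <;> omega
  · simp only [Set.mem_Iio, zigzag] at ha hb h; split_ifs at h <;> omega
  · simp only [Set.mem_Icc] at hv
    by_cases h : q < 2 * v
    · exact ⟨2 * (q - v), by simp only [Set.mem_Iio]; omega,
        by simp only [zigzag]; split_ifs <;> omega⟩
    · exact ⟨2 * v - 1, by simp only [Set.mem_Iio]; omega,
        by simp only [zigzag]; split_ifs <;> omega⟩

namespace Spider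

variable {d : ℕ} {y : Fin d → ℕ}

def parent (p : Σ i : Fin d, Fin (y i)) : Option (Σ i : Fin d, Fin (y i)) :=
  if (p.2 : ℕ) = 0 then none else some ⟨p.1, ⟨p.2 - 1, (Nat.sub_le _ _).trans_lt p.2.isLt⟩⟩

def edge (p : Σ i : Fin d, Fin (y i)) : Sym2 (Option (Σ i : Fin d, Fin (y i))) :=
  s(parent p, some p)

theorem parent_eq_none_iff {p : Σ i : Fin d, Fin (y i)} : parent p = none ↔ (p.2 : ℕ) = 0 := by
  unfold parent; split_ifs <;> simp_all

theorem parent_eq_some_iff {p p' : Σ i : Fin d, Fin (y i)} :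
    parent p = some p' ↔ p.1 = p'.1 ∧ (p.2 : ℕ) = p'.2 + 1 := by
  unfold parent
  split_ifs with h
  · simp [h]
  · rw [Option.some_inj, Sigma.fin_ext_iff]
    simp only
    omega

theorem parent_ne_some (p : Σ i : Fin d, Fin (y i)) : parent p ≠ some p := by
  rw [Ne, parent_eq_some_iff]; omega

theorem spiderRel_iff {u v : Option (Σ i : Fin d, Fin (y i))} :
    (∃ (i : Fin d) (j : Fin (y i)), (u = none ∧ v = some ⟨i, j⟩ ∧ (j : ℕ) = 0) ∨
      (∃ k : Fin (y i), u = some ⟨i, j⟩ ∧ v = some ⟨i, k⟩ ∧ (j : ℕ) + 1 = (k : ℕ))) ↔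
    ∃ p, parent p = u ∧ some p = v := by
  constructor
  · rintro ⟨i, j, ⟨rfl, rfl, hj⟩ | ⟨k, rfl, rfl, hjk⟩⟩
    · exact ⟨⟨i, j⟩, parent_eq_none_iff.mpr hj, rfl⟩
    · exact ⟨⟨i, k⟩, parent_eq_some_iff.mpr ⟨rfl, hjk.symm⟩, rfl⟩
  · rintro ⟨⟨i, k⟩, hu, rfl⟩
    by_cases hk : (k : ℕ) = 0
    · exact ⟨i, k, Or.inl ⟨hu.symm.trans (parent_eq_none_iff.mpr hk), rfl, hk⟩⟩
    · refine ⟨i, ⟨k - 1, (Nat.sub_le _ _).trans_lt k.isLt⟩, Or.inr ⟨k, ?_, rfl, Nat.sub_add_cancel (Nat.pos_of_ne_zero hk)⟩⟩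
      rw [← hu, parent_eq_some_iff]
      exact ⟨rfl, (Nat.sub_add_cancel (Nat.pos_of_ne_zero hk)).symm⟩

theorem adj_iff {u v : Option (Σ i : Fin d, Fin (y i))} :
    (spider d y).Adj u v ↔ ∃ p, edge p = s(u, v) := by
  simp only [spider, SimpleGraph.fromRel_adj, spiderRel_iff, edge, Sym2.eq_iff]
  constructor
  · rintro ⟨-, ⟨p, h⟩ | ⟨p, h⟩⟩
    exacts [⟨p, Or.inl h⟩, ⟨p, Or.inr h⟩]
  · rintro ⟨p, ⟨rfl, rfl⟩ | ⟨rfl, rfl⟩⟩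
    · exact ⟨parent_ne_some p, Or.inl ⟨p, rfl, rfl⟩⟩
    · exact ⟨(parent_ne_some p).symm, Or.inr ⟨p, rfl, rfl⟩⟩

theorem edgeSet_eq : (spider d y).edgeSet = Set.range edge := by
  ext e
  induction e with
  | h u v => simp [adj_iff]

theorem edge_mem_edgeSet (p : Σ i : Fin d, Fin (y i)) : edge p ∈ (spider d y).edgeSet :=
  edgeSet_eq ▸ Set.mem_range_self p

theorem edge_injective : Injective (edge : (Σ i : Fin d, Fin (y i)) → _) := by
  intro p p' h
  rcases Sym2.eq_iff.mp h with ⟨-, h⟩ | ⟨h₁, h₂⟩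
  · exact Option.some_injective _ h
  · rw [parent_eq_some_iff] at h₁
    rw [eq_comm, parent_eq_some_iff] at h₂
    omega

theorem edgeSet_ncard : (spider d y).edgeSet.ncard = ∑ i, y i := by
  rw [edgeSet_eq, Set.ncard_range_of_injective edge_injective, Nat.card_sigma]
  simp

theorem mem_neighborSet_iff {u v : Option (Σ i : Fin d, Fin (y i))} :
    v ∈ (spider d y).neighborSet u ↔
      ∃ p, (parent p = u ∧ some p = v) ∨ (parent p = v ∧ some p = u) := by
  simp only [SimpleGraph.mem_neighborSet, adj_iff, edge, Sym2.eq_iff]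

theorem neighborSet_none (h0 : ∀ i, 0 < y i) :
    (spider d y).neighborSet none = Set.range fun i => some ⟨i, ⟨0, h0 i⟩⟩ := by
  ext v
  simp only [mem_neighborSet_iff, reduceCtorEq, and_false, or_false, parent_eq_none_iff,
    Set.mem_range]
  constructor
  · rintro ⟨⟨i, j⟩, hj, rfl⟩
    exact ⟨i, by rw [Option.some_inj, Sigma.fin_ext_iff]; exact ⟨rfl, hj.symm⟩⟩
  · rintro ⟨i, rfl⟩
    exact ⟨_, rfl, rfl⟩

theorem neighborSet_of_succ {i : Fin d} {j k : Fin (y i)} (hjk : (j : ℕ) + 1 = k) :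
    (spider d y).neighborSet (some ⟨i, j⟩) = {parent ⟨i, j⟩, some ⟨i, k⟩} := by
  ext v
  simp only [mem_neighborSet_iff, parent_eq_some_iff, Option.some_inj, Set.mem_insert_iff,
    Set.mem_singleton_iff]
  constructor
  · rintro ⟨p, ⟨⟨h₁, h₂⟩, rfl⟩ | ⟨rfl, rfl⟩⟩
    · exact Or.inr (congrArg some (Sigma.fin_ext_iff.mpr ⟨h₁, by dsimp only at h₂ ⊢; omega⟩))
    · exact Or.inl rfl
  · rintro (rfl | rfl)
    · exact ⟨_, Or.inr ⟨rfl, rfl⟩⟩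
    · exact ⟨_, Or.inl ⟨⟨rfl, hjk.symm⟩, rfl⟩⟩

theorem neighborSet_of_last {i : Fin d} {j : Fin (y i)} (hj : (j : ℕ) + 1 = y i) :
    (spider d y).neighborSet (some ⟨i, j⟩) = {parent ⟨i, j⟩} := by
  ext v
  simp only [mem_neighborSet_iff, parent_eq_some_iff, Option.some_inj, Set.mem_singleton_iff]
  constructor
  · rintro ⟨⟨i', k⟩, ⟨⟨rfl, h⟩, -⟩ | ⟨rfl, h⟩⟩
    · dsimp only at h hj
      exact absurd k.isLt (by omega)
    · rw [h]
  · rintro rfl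
    exact ⟨_, Or.inr ⟨rfl, rfl⟩⟩

section VertexSum

variable (f : Sym2 (Option (Σ i : Fin d, Fin (y i))) → ℕ)

theorem vertexSum_none (h0 : ∀ i, 0 < y i) :
    vertexSum (spider d y) f none = ∑ i, f (edge ⟨i, ⟨0, h0 i⟩⟩) := by
  have hinj : Injective fun i => (some ⟨i, ⟨0, h0 i⟩⟩ : Option (Σ i : Fin d, Fin (y i))) :=
    fun i i' h => (Sigma.fin_ext_iff.mp (Option.some_injective _ h)).1
  rw [vertexSum, neighborSet_none h0, finsum_mem_range hinj, finsum_eq_sum_of_fintype]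
  exact Finset.sum_congr rfl fun i _ => by rw [edge, parent_eq_none_iff.mpr rfl]

theorem vertexSum_of_succ {i : Fin d} {j k : Fin (y i)} (hjk : (j : ℕ) + 1 = k) :
    vertexSum (spider d y) f (some ⟨i, j⟩) = f (edge ⟨i, j⟩) + f (edge ⟨i, k⟩) := by
  have hpar : parent ⟨i, k⟩ = some ⟨i, j⟩ := parent_eq_some_iff.mpr ⟨rfl, hjk.symm⟩
  have hne : parent ⟨i, j⟩ ≠ some ⟨i, k⟩ := by
    rw [Ne, parent_eq_some_iff]
    dsimp only
    omega
  rw [vertexSum, neighborSet_of_succ hjk, finsum_mem_pair hne, edge, edge, hpar, Sym2.eq_swap]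

theorem vertexSum_of_last {i : Fin d} {j : Fin (y i)} (hj : (j : ℕ) + 1 = y i) :
    vertexSum (spider d y) f (some ⟨i, j⟩) = f (edge ⟨i, j⟩) := by
  rw [vertexSum, neighborSet_of_last hj, finsum_mem_singleton, edge, Sym2.eq_swap]

def tip (h0 : ∀ i, 0 < y i) (i : Fin d) : Σ i : Fin d, Fin (y i) :=
  ⟨i, ⟨y i - 1, Nat.sub_lt (h0 i) one_pos⟩⟩

theorem vertexSum_tip (h0 : ∀ i, 0 < y i) (i : Fin d) :
    vertexSum (spider d y) f (some (tip h0 i)) = f (edge (tip h0 i)) :=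
  vertexSum_of_last f (Nat.sub_add_cancel (h0 i))

end VertexSum

theorem vertexSum_ne_of_adj {f : Sym2 (Option (Σ i : Fin d, Fin (y i))) → ℕ}
    (h : ∀ p, vertexSum (spider d y) f (parent p) ≠ vertexSum (spider d y) f (some p))
    ⦃u v : Option (Σ i : Fin d, Fin (y i))⦄ (huv : (spider d y).Adj u v) :
    vertexSum (spider d y) f u ≠ vertexSum (spider d y) f v := by
  obtain ⟨p, hp⟩ := adj_iff.mp huv
  rcases Sym2.eq_iff.mp hp with ⟨rfl, rfl⟩ | ⟨rfl, rfl⟩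
  exacts [h p, (h p).symm]

theorem two_mul_le_vertexSum_none (h0 : ∀ i, 0 < y i)
    {f : Sym2 (Option (Σ i : Fin d, Fin (y i))) → ℕ} (hinj : Set.InjOn f (spider d y).edgeSet)
    (hpos : ∀ e ∈ (spider d y).edgeSet, 0 < f e)
    (hineq : 2 * (2 * ∑ i, y i - 1) < d * (d + 1)) :
    2 * ∑ i, y i ≤ vertexSum (spider d y) f none := by
  have hsum := card_mul_succ_le_two_mul_sum_of_injective
    (g := fun i => f (edge ⟨i, ⟨0, h0 i⟩⟩))
    (fun i i' h => (Sigma.fin_ext_iff.mp (edge_injective (hinj (edge_mem_edgeSet _)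
      (edge_mem_edgeSet _) h))).1)
    (fun i => hpos _ (edge_mem_edgeSet _))
  rw [Fintype.card_fin] at hsum
  rw [vertexSum_none f h0]
  omega

theorem exists_vertexSum_mem_Ioo (hy : ∀ i, 2 ≤ y i) (hq : 0 < ∑ i, y i)
    {f : Sym2 (Option (Σ i : Fin d, Fin (y i))) → ℕ}
    (hf : Set.BijOn f (spider d y).edgeSet (Set.Icc 1 (∑ i, y i))) :
    ∃ x, vertexSum (spider d y) f x ∈ Set.Ioo (∑ i, y i) (2 * ∑ i, y i) := by
  obtain ⟨e, he, hfe⟩ := hf.surjOn ⟨hq, le_rfl⟩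
  rw [edgeSet_eq] at he
  obtain ⟨⟨i, j⟩, rfl⟩ := he
  obtain ⟨a, b, hab, hj⟩ := Fin.exists_consecutive (hy i) j
  refine ⟨some ⟨i, a⟩, ?_⟩
  have hne : f (edge ⟨i, a⟩) ≠ f (edge ⟨i, b⟩) := fun h => by
    have := Sigma.fin_ext_iff.mp
      (edge_injective (hf.injOn (edge_mem_edgeSet _) (edge_mem_edgeSet _) h))
    dsimp only at this
    omega
  have ha := hf.mapsTo (edge_mem_edgeSet ⟨i, a⟩)
  have hb := hf.mapsTo (edge_mem_edgeSet ⟨i, b⟩)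
  rw [Set.mem_Icc] at ha hb
  rw [vertexSum_of_succ f hab]
  rcases hj with rfl | rfl <;> exact ⟨by omega, by omega⟩

theorem add_two_le_colorCount (hy : ∀ i, 2 ≤ y i) (hineq : 2 * (2 * ∑ i, y i - 1) < d * (d + 1))
    {f : Sym2 (Option (Σ i : Fin d, Fin (y i))) → ℕ} (hf : IsLocalAntimagic (spider d y) f) :
    d + 2 ≤ colorCount (spider d y) f := by
  classical
  have h0 : ∀ i, 0 < y i := fun i => by have := hy i; omega
  have hqd : 2 * d ≤ ∑ i, y i := by
    simpa [mul_comm] using card_nsmul_le_sum univ y 2 fun i _ => hy i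
  have hd : 0 < d := Nat.pos_of_ne_zero (by rintro rfl; simp at hineq)
  have hbij := hf.1
  rw [edgeSet_ncard] at hbij
  have hcore := two_mul_le_vertexSum_none h0 hbij.injOn (fun e he => (hbij.mapsTo he).1) hineq
  obtain ⟨x, hx⟩ := exists_vertexSum_mem_Ioo hy (by omega) hbij
  set tipSum := fun i => vertexSum (spider d y) f (some (tip h0 i))
  have htip : ∀ i, tipSum i = f (edge (tip h0 i)) := vertexSum_tip f h0
  have htip_inj : Injective tipSum := fun i i' h => by
    rw [htip, htip] at h
    exact (Sigma.fin_ext_iff.mp (edge_injective (hbij.injOn (edge_mem_edgeSet _)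
      (edge_mem_edgeSet _) h))).1
  have htip_le : ∀ i, tipSum i ≤ ∑ i, y i :=
    fun i => htip i ▸ (hbij.mapsTo (edge_mem_edgeSet _)).2
  have hT : #(insert (vertexSum (spider d y) f none) (insert (vertexSum (spider d y) f x)
      (univ.image tipSum))) = d + 2 := by
    rw [card_insert_of_notMem, card_insert_of_notMem, card_image_of_injective _ htip_inj,
      card_univ, Fintype.card_fin]
    · simp only [mem_image, mem_univ, true_and, not_exists]
      exact fun i h => by have := htip_le i; have := hx.1; omega
    · simp only [mem_insert, mem_image, mem_univ, true_and, not_or, not_exists]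
      exact ⟨by have := hx.2; omega, fun i h => by have := htip_le i; omega⟩
  rw [← hT]
  apply card_le_colorCount
  simp only [coe_insert, coe_image, coe_univ, Set.image_univ, Set.insert_subset_iff]
  exact ⟨Set.mem_range_self _, Set.mem_range_self _,
    Set.range_subset_iff.mpr fun i => Set.mem_range_self _⟩

/-- Edges numbered leg by leg, each leg from its tip towards the core: consecutive edges of a
leg get consecutive numbers, decreasing towards the tip, and the tip edge of leg `0` gets `0`. -/
def edgeIndex : (Σ i : Fin d, Fin (y i)) ≃ Fin (∑ i, y i) :=
  (Equiv.sigmaCongrRight fun _ => Fin.revPerm).trans finSigmaFinEquiv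

theorem edgeIndex_of_succ {i : Fin d} {j k : Fin (y i)} (hjk : (j : ℕ) + 1 = k) :
    (edgeIndex ⟨i, j⟩ : ℕ) = edgeIndex ⟨i, k⟩ + 1 := by
  simp only [edgeIndex, Equiv.trans_apply, Equiv.sigmaCongrRight_apply, Fin.revPerm_apply,
    finSigmaFinEquiv_apply, Fin.val_rev]
  omega

theorem edgeIndex_tip_zero (h0 : ∀ i, 0 < y i) (hd : 0 < d) :
    (edgeIndex (tip h0 ⟨0, hd⟩) : ℕ) = 0 := by
  simp only [edgeIndex, tip, Equiv.trans_apply, Equiv.sigmaCongrRight_apply, Fin.revPerm_apply,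
    finSigmaFinEquiv_apply, Fin.val_rev, Finset.univ_eq_empty, Finset.sum_empty]
  omega

variable (y) in
noncomputable def zigzagLabeling : Sym2 (Option (Σ i : Fin d, Fin (y i))) → ℕ :=
  extend edge (fun p => zigzag (∑ i, y i) (edgeIndex p)) 0

theorem zigzagLabeling_edge (p : Σ i : Fin d, Fin (y i)) :
    zigzagLabeling y (edge p) = zigzag (∑ i, y i) (edgeIndex p) :=
  edge_injective.extend_apply _ _ p

theorem bijOn_zigzagLabeling :
    Set.BijOn (zigzagLabeling y) (spider d y).edgeSet (Set.Icc 1 (∑ i, y i)) := by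
  have hcomp : zigzagLabeling y ∘ edge = zigzag (∑ i, y i) ∘ ((↑) ∘ edgeIndex) :=
    funext zigzagLabeling_edge
  rw [edgeSet_eq, ← Set.image_univ, ← Set.bijOn_comp_iff edge_injective.injOn, hcomp,
    Set.bijOn_comp_iff (Fin.val_injective.comp edgeIndex.injective).injOn, Set.image_univ,
    EquivLike.range_comp, Fin.range_val]
  exact bijOn_zigzag _

theorem vertexSum_zigzagLabeling_of_succ {i : Fin d} {j k : Fin (y i)} (hjk : (j : ℕ) + 1 = k) :
    vertexSum (spider d y) (zigzagLabeling y) (some ⟨i, j⟩) =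
      ∑ i, y i + 1 - edgeIndex ⟨i, k⟩ % 2 := by
  have hidx := edgeIndex_of_succ hjk
  rw [vertexSum_of_succ _ hjk, zigzagLabeling_edge, zigzagLabeling_edge, hidx]
  exact zigzag_succ_add_zigzag (hidx ▸ (edgeIndex ⟨i, j⟩).isLt)

theorem isLocalAntimagic_zigzagLabeling (hy : ∀ i, 2 ≤ y i)
    (hineq : 2 * (2 * ∑ i, y i - 1) < d * (d + 1)) :
    IsLocalAntimagic (spider d y) (zigzagLabeling y) := by
  have h0 : ∀ i, 0 < y i := fun i => by have := hy i; omega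
  have hbij := bijOn_zigzagLabeling (y := y)
  refine ⟨edgeSet_ncard ▸ hbij, vertexSum_ne_of_adj ?_⟩
  rintro ⟨i, k⟩
  have hyq : y i ≤ ∑ i, y i := single_le_sum (fun i _ => Nat.zero_le (y i)) (mem_univ i)
  by_cases hk : (k : ℕ) = 0
  · have hcore := two_mul_le_vertexSum_none h0 hbij.injOn (fun e he => (hbij.mapsTo he).1) hineq
    rw [parent_eq_none_iff.mpr hk,
      vertexSum_zigzagLabeling_of_succ (k := ⟨1, hy i⟩) (by simp only; omega)]
    have := hy i
    omega
  let j : Fin (y i) := ⟨k - 1, by omega⟩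
  have hjk : (j : ℕ) + 1 = k := Nat.sub_add_cancel (Nat.pos_of_ne_zero hk)
  rw [(parent_eq_some_iff.mpr ⟨rfl, hjk.symm⟩ : parent ⟨i, k⟩ = some ⟨i, j⟩),
    vertexSum_zigzagLabeling_of_succ hjk]
  by_cases hl : (k : ℕ) + 1 = y i
  · rw [vertexSum_of_last _ hl, zigzagLabeling_edge]
    intro h
    -- A tip label reaches `q` only at edge number `0`, where the inner sum is `q + 1`.
    have hlt := (edgeIndex (⟨i, k⟩ : Σ i, Fin (y i))).isLt
    have hle := ((bijOn_zigzag (∑ i, y i)).mapsTo hlt).2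
    have hzero : (edgeIndex (⟨i, k⟩ : Σ i, Fin (y i)) : ℕ) = 0 :=
      (bijOn_zigzag _).injOn hlt (show 0 < ∑ i, y i by omega) (by rw [zigzag_zero]; omega)
    omega
  · let l : Fin (y i) := ⟨k + 1, by omega⟩
    rw [vertexSum_zigzagLabeling_of_succ (k := l) rfl, edgeIndex_of_succ (k := l) rfl]
    omega

theorem colorCount_zigzagLabeling_le (h0 : ∀ i, 0 < y i) :
    colorCount (spider d y) (zigzagLabeling y) ≤ d + 2 := by
  classical
  set tipSum := fun i => vertexSum (spider d y) (zigzagLabeling y) (some (tip h0 i))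
  calc colorCount (spider d y) (zigzagLabeling y)
      ≤ #(insert (vertexSum (spider d y) (zigzagLabeling y) none)
          (insert (∑ i, y i + 1) (univ.image tipSum))) := colorCount_le_card ?_
    _ ≤ d + 2 := by
      have : #(univ.image tipSum) ≤ d := card_image_le.trans_eq (by simp)
      grind [card_insert_le]
  rintro _ ⟨_ | ⟨i, j⟩, rfl⟩
  · simp
  by_cases hj : (j : ℕ) + 1 = y i
  · have : (⟨i, j⟩ : Σ i : Fin d, Fin (y i)) = tip h0 i := by
      rw [Sigma.fin_ext_iff]; exact ⟨rfl, by simp only [tip]; omega⟩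
    simp [this, tipSum]
  · rw [vertexSum_zigzagLabeling_of_succ (k := ⟨j + 1, by omega⟩) rfl]
    rcases Nat.mod_two_eq_zero_or_one (edgeIndex (⟨i, ⟨j + 1, by omega⟩⟩ : Σ i, Fin (y i)) : ℕ)
      with h | h
    · simp [h]
    · have hd : 0 < d := i.pos
      have : tipSum ⟨0, hd⟩ = ∑ i, y i := by
        simp only [tipSum, vertexSum_tip, zigzagLabeling_edge, edgeIndex_tip_zero, zigzag_zero]
      simp only [h, coe_insert, coe_image, coe_univ, Set.image_univ]
      exact Or.inr (Or.inr ⟨⟨0, hd⟩, by rw [this]; omega⟩)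

end Spider

theorem stmt5_general (d : ℕ) (y : Fin d → ℕ) (hy : ∀ i, 2 ≤ y i)
    (q : ℕ) (hq : q = ∑ i : Fin d, y i)
    (hineq : d * (d + 1) > 2 * (2 * q - 1)) :
    chiLA (spider d y) = d + 2 := by
  subst hq
  have h0 : ∀ i, 0 < y i := fun i => by have := hy i; omega
  exact chiLA_eq_of_le_of_forall_le
    ⟨_, Spider.isLocalAntimagic_zigzagLabeling hy hineq, Spider.colorCount_zigzagLabeling_le h0⟩
    fun _ hf => Spider.add_two_le_colorCount hy hineq hf

theorem stmt5 (d : ℕ) (hd : 3 ≤ d) (y : Fin d → ℕ) (hy : ∀ i, 2 ≤ y i)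
    (q : ℕ) (hq : q = ∑ i : Fin d, y i)
    (hineq : d * (d + 1) > 2 * (2 * q - 1)) :
    chiLA (spider d y) = d + 2 :=
  stmt5_general d y hy q hq hineq
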